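/- arXiv:2407.00617 — 6 statements merged into one kernel-verified Lean document; each statement's English description precedes it below -/
import Mathlib

section
/- Let Y be a finite set, P : Y × Y → [0,1] with P(y,y') + P(y',y) = 1, τ > 0, π_ref a fully supported distribution on Y, and define J(π₁,π₂) = ∑_{y,y'} π₁(y)π₂(y')P(y,y') − τ·KL(π₁‖π_ref) + τ·KL(π₂‖π_ref) over fully supported distributions. If π* satisfies J(π*,π) ≥ J(π',π) for all π' and all π (i.e., π* is a max-player Nash policy with itself as opponent), then for any distribution π with support contained in supp(π_ref), J(π*, π) ≥ 1/2. -/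
open Finset

/-- KL divergence between two distributions on a finite set. -/
noncomputable def KL {Y : Type*} [Fintype Y] (p q : Y → ℝ) : ℝ :=
  ∑ y, p y * Real.log (p y / q y)

/-- The KL-regularized two-player game objective. -/
noncomputable def gameJ {Y : Type*} [Fintype Y]
    (P : Y → Y → ℝ) (τ : ℝ) (πref p1 p2 : Y → ℝ) : ℝ :=
  (∑ y, ∑ y', p1 y * p2 y' * P y y') - τ * KL p1 πref + τ * KL p2 πref

/-! The game is antisymmetric: since `P y y' + P y' y = 1`, we have `J(p, q) + J(q, p) = 1`, so
`J(π*, π*) = 1/2`, and the Nash property `J(π, π*) ≤ J(π*, π*)` turns into `1/2 ≤ J(π*, π)` for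
every fully supported `π`. A distribution `π` supported in `supp π_ref` is the limit of the fully
supported mixtures `(1 - ε) π + ε π_ref`, and `J(π*, ·)` is continuous because `x ↦ x log (x / c)`
is. -/

lemma continuous_mul_log_div (c : ℝ) : Continuous fun x : ℝ => x * Real.log (x / c) := by
  rcases eq_or_ne c 0 with rfl | hc
  · simpa using continuous_const
  have h : (fun x : ℝ => x * Real.log (x / c)) = fun x => x * Real.log x - Real.log c * x := by
    funext x
    rcases eq_or_ne x 0 with rfl | hx
    · simp
    · rw [Real.log_div hx hc]; ring
  rw [h]
  exact Real.continuous_mul_log.sub (continuous_const.mul continuous_id)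

section Game

variable {Y : Type*} [Fintype Y]

lemma continuous_KL_left (q : Y → ℝ) : Continuous fun p : Y → ℝ => KL p q := by
  unfold KL
  exact continuous_finsetSum _ fun y _ => (continuous_mul_log_div (q y)).comp (continuous_apply y)

lemma continuous_gameJ_right (P : Y → Y → ℝ) (τ : ℝ) (πref p : Y → ℝ) :
    Continuous fun q => gameJ P τ πref p q := by
  unfold gameJ
  have := continuous_KL_left (Y := Y) πref
  fun_prop

lemma gameJ_add_gameJ_swap {P : Y → Y → ℝ} (hP : ∀ y y', P y y' + P y' y = 1) (τ : ℝ)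
    (πref : Y → ℝ) {p q : Y → ℝ} (hp : ∑ y, p y = 1) (hq : ∑ y, q y = 1) :
    gameJ P τ πref p q + gameJ P τ πref q p = 1 := by
  have hpairs : ∑ y, ∑ y', (p y * q y' * P y y' + q y' * p y * P y' y) = 1 := by
    simp_rw [mul_comm (q _) (p _), mul_assoc, ← mul_add, hP, mul_one, ← Finset.mul_sum, hq,
      mul_one, hp]
  have hswap : ∑ y, ∑ y', q y * p y' * P y y' = ∑ y, ∑ y', q y' * p y * P y' y :=
    Finset.sum_comm
  simp only [Finset.sum_add_distrib] at hpairs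
  unfold gameJ
  linarith

lemma gameJ_self {P : Y → Y → ℝ} (hP : ∀ y y', P y y' + P y' y = 1) (τ : ℝ)
    (πref : Y → ℝ) {p : Y → ℝ} (hp : ∑ y, p y = 1) :
    gameJ P τ πref p p = 1 / 2 := by
  linarith [gameJ_add_gameJ_swap hP τ πref hp hp]

end Game

lemma le_of_forall_le_lineMap {E : Type*} [AddCommGroup E] [Module ℝ E] [TopologicalSpace E]
    [IsTopologicalAddGroup E] [ContinuousSMul ℝ E] {f : E → ℝ} (hf : Continuous f) {c : ℝ}
    {x z : E} (h : ∀ ε ∈ Set.Ioo (0 : ℝ) 1, c ≤ f (AffineMap.lineMap x z ε)) : c ≤ f x := by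
  have hlim : Filter.Tendsto (fun ε : ℝ => f (AffineMap.lineMap x z ε))
      (nhdsWithin 0 (Set.Ioi 0)) (nhds (f x)) := by
    refine Filter.Tendsto.mono_left ?_ nhdsWithin_le_nhds
    exact (hf.comp (AffineMap.lineMap_continuous (R := ℝ))).tendsto' 0 (f x) (by simp)
  exact ge_of_tendsto hlim (Filter.mem_of_superset (Ioo_mem_nhdsGT zero_lt_one) h)

lemma lineMap_apply_pos {Y : Type*} {π ρ : Y → ℝ} (hπ : ∀ y, 0 ≤ π y) (hρ : ∀ y, 0 < ρ y) {ε : ℝ}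
    (hε : ε ∈ Set.Ioo (0 : ℝ) 1) (y : Y) : 0 < AffineMap.lineMap π ρ ε y := by
  rw [AffineMap.lineMap_apply_module]
  simp only [Pi.add_apply, Pi.smul_apply, smul_eq_mul]
  nlinarith [hπ y, hρ y, hε.1, hε.2]

lemma sum_lineMap_eq_one {Y : Type*} [Fintype Y] {π ρ : Y → ℝ} (hπ : ∑ y, π y = 1)
    (hρ : ∑ y, ρ y = 1) (ε : ℝ) : ∑ y, AffineMap.lineMap π ρ ε y = 1 := by
  simp only [AffineMap.lineMap_apply_module, Pi.add_apply, Pi.smul_apply, smul_eq_mul,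
    Finset.sum_add_distrib, ← Finset.mul_sum, hπ, hρ]
  ring

theorem nash_policy_half_win_rate_general {Y : Type*} [Fintype Y]
    (P : Y → Y → ℝ)
    (hPcomp : ∀ y y' : Y, P y y' + P y' y = 1)
    (τ : ℝ)
    (πref : Y → ℝ) (href0 : ∀ y, 0 < πref y) (href1 : ∑ y, πref y = 1)
    (πstar : Y → ℝ) (hstar0 : ∀ y, 0 < πstar y) (hstar1 : ∑ y, πstar y = 1)
    (hNash : ∀ π' π : Y → ℝ, (∀ y, 0 < π' y) → (∑ y, π' y = 1) →
      (∀ y, 0 < π y) → (∑ y, π y = 1) →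
      gameJ P τ πref π' π ≤ gameJ P τ πref πstar π) :
    ∀ π : Y → ℝ, (∀ y, 0 ≤ π y) → (∑ y, π y = 1) →
      1 / 2 ≤ gameJ P τ πref πstar π := by
  have hfull : ∀ p : Y → ℝ, (∀ y, 0 < p y) → (∑ y, p y = 1) →
      1 / 2 ≤ gameJ P τ πref πstar p := by
    intro p hp0 hp1
    have hbest := hNash p πstar hp0 hp1 hstar0 hstar1
    rw [gameJ_self hPcomp τ πref hstar1] at hbest
    linarith [gameJ_add_gameJ_swap hPcomp τ πref hstar1 hp1]
  intro π hπ0 hπ1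
  exact le_of_forall_le_lineMap (continuous_gameJ_right P τ πref πstar) (z := πref) fun ε hε =>
    hfull _ (lineMap_apply_pos hπ0 href0 hε) (sum_lineMap_eq_one hπ1 href1 ε)

theorem nash_policy_half_win_rate {Y : Type*} [Fintype Y]
    (P : Y → Y → ℝ)
    (hP01 : ∀ y y' : Y, 0 ≤ P y y' ∧ P y y' ≤ 1)
    (hPcomp : ∀ y y' : Y, P y y' + P y' y = 1)
    (τ : ℝ) (hτ : 0 < τ)
    (πref : Y → ℝ) (href0 : ∀ y, 0 < πref y) (href1 : ∑ y, πref y = 1)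
    (πstar : Y → ℝ) (hstar0 : ∀ y, 0 < πstar y) (hstar1 : ∑ y, πstar y = 1)
    (hNash : ∀ π' π : Y → ℝ, (∀ y, 0 < π' y) → (∑ y, π' y = 1) →
      (∀ y, 0 < π y) → (∑ y, π y = 1) →
      gameJ P τ πref π' π ≤ gameJ P τ πref πstar π) :
    ∀ π : Y → ℝ, (∀ y, 0 ≤ π y) → (∑ y, π y = 1) →
      1 / 2 ≤ gameJ P τ πref πstar π :=
  nash_policy_half_win_rate_general P hPcomp τ πref href0 href1 πstar hstar0 hstar1 hNash
end

section
/- Let Y be a finite set, η > τ > 0, π_t and π_ref fully supported distributions on Y, and g : Y → ℝ with g(y) = −P(y ≻ π_t) + τ(log(π_t(y)/π_ref(y)) + 1) where P(y ≻ π_t) = ∑_{y'} π_t(y') P(y,y'). Then the minimizer over distributions π of ⟨g, π⟩ + η·KL(π‖π_t) is π_{t+1}(y) ∝ exp(P(y ≻ π_t)/η) · π_ref(y)^{τ/η} · π_t(y)^{1−τ/η}. -/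
open Finset

/-- Expected win rate of response `y` against policy `πt`: P(y ≻ π_t). -/
noncomputable def winRate {Y : Type*} [Fintype Y]
    (P : Y → Y → ℝ) (πt : Y → ℝ) (y : Y) : ℝ :=
  ∑ y', πt y' * P y y'

/-- The OMD update target
`π_{t+1}(y) ∝ exp(P(y ≻ π_t)/η) · π_ref(y)^{τ/η} · π_t(y)^{1−τ/η}`. -/
noncomputable def omdNext {Y : Type*} [Fintype Y]
    (P : Y → Y → ℝ) (πref πt : Y → ℝ) (η τ : ℝ) (y : Y) : ℝ :=
  (Real.exp (winRate P πt y / η) * πref y ^ (τ / η) * πt y ^ (1 - τ / η)) /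
    ∑ y', Real.exp (winRate P πt y' / η) * πref y' ^ (τ / η) * πt y' ^ (1 - τ / η)

theorem omd_update_closed_form {Y : Type*} [Fintype Y]
    (P : Y → Y → ℝ)
    (hP01 : ∀ y y' : Y, 0 ≤ P y y' ∧ P y y' ≤ 1)
    (hPcomp : ∀ y y' : Y, P y y' + P y' y = 1)
    (η τ : ℝ) (hτ : 0 < τ) (hτη : τ < η)
    (πref : Y → ℝ) (href0 : ∀ y, 0 < πref y) (href1 : ∑ y, πref y = 1)
    (πt : Y → ℝ) (ht0 : ∀ y, 0 < πt y) (ht1 : ∑ y, πt y = 1)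
    (g : Y → ℝ)
    (hg : ∀ y, g y = -(winRate P πt y) + τ * (Real.log (πt y / πref y) + 1)) :
    ∀ π : Y → ℝ, (∀ y, 0 ≤ π y) → (∑ y, π y = 1) →
      (∑ y, g y * omdNext P πref πt η τ y) + η * KL (omdNext P πref πt η τ) πt ≤
        (∑ y, g y * π y) + η * KL π πt ∧
      ((∑ y, g y * π y) + η * KL π πt =
        (∑ y, g y * omdNext P πref πt η τ y) + η * KL (omdNext P πref πt η τ) πt →
        π = omdNext P πref πt η τ) := by
  have hη : 0 < η := hτ.trans hτη
  have hNe : (Finset.univ : Finset Y).Nonempty := by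
    by_contra h
    rw [Finset.not_nonempty_iff_eq_empty] at h
    have := ht1
    rw [h, Finset.sum_empty] at this
    norm_num at this
  set w : Y → ℝ := fun y =>
    Real.exp (winRate P πt y / η) * πref y ^ (τ / η) * πt y ^ (1 - τ / η) with hwdef
  have hw : ∀ y, 0 < w y := fun y => by
    exact mul_pos (mul_pos (Real.exp_pos _) (Real.rpow_pos_of_pos (href0 y) _))
      (Real.rpow_pos_of_pos (ht0 y) _)
  set Z : ℝ := ∑ y', w y' with hZdef
  have hZ : 0 < Z := Finset.sum_pos (fun y _ => hw y) hNe
  set πs : Y → ℝ := omdNext P πref πt η τ with hπs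
  have hπsw : ∀ y, πs y = w y / Z := fun y => rfl
  have hπs0 : ∀ y, 0 < πs y := fun y => div_pos (hw y) hZ
  have hπs1 : ∑ y, πs y = 1 := by
    simp only [hπsw]
    rw [← Finset.sum_div, ← hZdef, div_self hZ.ne']
  -- log of w
  have hlogw : ∀ y, Real.log (w y) =
      winRate P πt y / η + (τ / η) * Real.log (πref y) + (1 - τ / η) * Real.log (πt y) := by
    intro y
    have h1 : Real.exp (winRate P πt y / η) ≠ 0 := (Real.exp_pos _).ne'
    have h2 : πref y ^ (τ / η) ≠ 0 := (Real.rpow_pos_of_pos (href0 y) _).ne'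
    have h3 : πt y ^ (1 - τ / η) ≠ 0 := (Real.rpow_pos_of_pos (ht0 y) _).ne'
    show Real.log (Real.exp (winRate P πt y / η) * πref y ^ (τ / η) * πt y ^ (1 - τ / η)) = _
    rw [Real.log_mul (mul_ne_zero h1 h2) h3, Real.log_mul h1 h2,
      Real.log_exp, Real.log_rpow (href0 y), Real.log_rpow (ht0 y)]
  -- key formula for g
  have hgkey : ∀ y, g y = -η * Real.log (πs y / πt y) + (τ - η * Real.log Z) := by
    intro y
    rw [hg y, hπsw y, Real.log_div (div_pos (hw y) hZ).ne' (ht0 y).ne',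
      Real.log_div (hw y).ne' hZ.ne', hlogw y,
      Real.log_div (ht0 y).ne' (href0 y).ne']
    field_simp
    ring
  -- identity: objective = η * ∑ π log(π/πs) + const, for any π ≥ 0 with ∑ π = 1
  have hid : ∀ π : Y → ℝ, (∀ y, 0 ≤ π y) → (∑ y, π y = 1) →
      (∑ y, g y * π y) + η * KL π πt
        = η * (∑ y, π y * Real.log (π y / πs y)) + (τ - η * Real.log Z) := by
    intro π h0 h1
    have hpt : ∀ y, g y * π y + η * (π y * Real.log (π y / πt y))
        = η * (π y * Real.log (π y / πs y)) + (τ - η * Real.log Z) * π y := by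
      intro y
      rcases eq_or_lt_of_le (h0 y) with h | h
      · simp [← h]
      · rw [hgkey y, Real.log_div h.ne' (ht0 y).ne', Real.log_div h.ne' (hπs0 y).ne',
          Real.log_div (hπs0 y).ne' (ht0 y).ne']
        ring
    rw [KL, Finset.mul_sum, ← Finset.sum_add_distrib, Finset.mul_sum]
    calc ∑ y, (g y * π y + η * (π y * Real.log (π y / πt y)))
        = ∑ y, (η * (π y * Real.log (π y / πs y)) + (τ - η * Real.log Z) * π y) := by
          exact Finset.sum_congr rfl fun y _ => hpt y
      _ = (∑ y, η * (π y * Real.log (π y / πs y))) + (τ - η * Real.log Z) * ∑ y, π y := by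
          rw [Finset.sum_add_distrib, Finset.mul_sum]
      _ = _ := by rw [h1, mul_one]
  intro π h0 h1
  have hFs : (∑ y, g y * πs y) + η * KL πs πt = τ - η * Real.log Z := by
    rw [hid πs (fun y => (hπs0 y).le) hπs1]
    have : ∀ y, πs y * Real.log (πs y / πs y) = 0 := fun y => by
      rw [div_self (hπs0 y).ne', Real.log_one, mul_zero]
    simp [this]
  have hFπ := hid π h0 h1
  -- pointwise Gibbs inequality
  have hge : ∀ y, π y - πs y ≤ π y * Real.log (π y / πs y) := by
    intro y
    rcases eq_or_lt_of_le (h0 y) with h | h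
    · simp [← h]; exact (hπs0 y).le
    · have hlog := Real.log_le_sub_one_of_pos (div_pos (hπs0 y) h)
      rw [Real.log_div (hπs0 y).ne' h.ne'] at hlog
      rw [Real.log_div h.ne' (hπs0 y).ne']
      have := (div_le_iff₀ h).mp (le_of_eq rfl : πs y / π y ≤ πs y / π y)
      nlinarith [div_mul_cancel₀ (πs y) h.ne']
  have hsum_ge : 0 ≤ ∑ y, π y * Real.log (π y / πs y) := by
    have : ∑ y, (π y - πs y) ≤ ∑ y, π y * Real.log (π y / πs y) :=
      Finset.sum_le_sum fun y _ => hge y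
    rwa [Finset.sum_sub_distrib, h1, hπs1, sub_self] at this
  constructor
  · rw [hFs, hFπ]; nlinarith
  · intro heq
    by_contra hne
    obtain ⟨y0, hy0⟩ := Function.ne_iff.mp hne
    have hstrict : π y0 - πs y0 < π y0 * Real.log (π y0 / πs y0) := by
      rcases eq_or_lt_of_le (h0 y0) with h | h
      · simp [← h]; exact hπs0 y0
      · have hne1 : π y0 / πs y0 ≠ 1 := by
          intro hc
          exact hy0 ((div_eq_one_iff_eq (hπs0 y0).ne').mp hc)
        have hne1' : πs y0 / π y0 ≠ 1 := by
          intro hc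
          exact hy0 ((div_eq_one_iff_eq h.ne').mp hc).symm
        have hlog := Real.log_lt_sub_one_of_pos (div_pos (hπs0 y0) h) hne1'
        rw [Real.log_div (hπs0 y0).ne' h.ne'] at hlog
        rw [Real.log_div h.ne' (hπs0 y0).ne']
        nlinarith [div_mul_cancel₀ (πs y0) h.ne']
    have hsum_gt : 0 < ∑ y, π y * Real.log (π y / πs y) := by
      have hlt : ∑ y, (π y - πs y) < ∑ y, π y * Real.log (π y / πs y) :=
        Finset.sum_lt_sum (fun y _ => hge y) ⟨y0, Finset.mem_univ y0, hstrict⟩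
      rwa [Finset.sum_sub_distrib, h1, hπs1, sub_self] at hlt
    rw [hFs, hFπ] at heq
    nlinarith
end

section
/- Let Y be a finite set, P : Y×Y → [0,1] with P(y,y')+P(y',y)=1, π_t a fully supported distribution on Y, η, τ > 0, π_ref fully supported, and π_{t+1}(y) ∝ exp(P(y ≻ π_t)/η)·π_ref(y)^{τ/η}·π_t(y)^{1−τ/η} where P(y ≻ π_t) = ∑_{y'} π_t(y')P(y,y'). Define L_t(π) = ∑_{y,y'} π_t(y)π_t(y')·(h_t(π,y,y') − (P(y ≻ π_t) − P(y' ≻ π_t))/η)², where h_t(π,y,y') = log(π(y)/π(y')) − (τ/η)log(π_ref(y)/π_ref(y')) − ((η−τ)/η)log(π_t(y)/π_t(y')). Then π_{t+1} is the unique minimizer of L_t over fully supported distributions π on Y, with L_t(π_{t+1}) = 0. -/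
open Finset

/-- The log-ratio function `h_t(π, y, y')`. -/
noncomputable def hFun {Y : Type*}
    (πref πt : Y → ℝ) (η τ : ℝ) (π : Y → ℝ) (y y' : Y) : ℝ :=
  Real.log (π y / π y') - (τ / η) * Real.log (πref y / πref y') -
    ((η - τ) / η) * Real.log (πt y / πt y')

/-- The INPO square loss `L_t(π)`. -/
noncomputable def Lt {Y : Type*} [Fintype Y]
    (P : Y → Y → ℝ) (πref πt : Y → ℝ) (η τ : ℝ) (π : Y → ℝ) : ℝ :=
  ∑ y, ∑ y', πt y * πt y' *
    (hFun πref πt η τ π y y' - (winRate P πt y - winRate P πt y') / η) ^ 2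

theorem omdNext_unique_minimizer_of_Lt {Y : Type*} [Fintype Y]
    (P : Y → Y → ℝ)
    (hP01 : ∀ y y' : Y, 0 ≤ P y y' ∧ P y y' ≤ 1)
    (hPcomp : ∀ y y' : Y, P y y' + P y' y = 1)
    (η τ : ℝ) (hη : 0 < η) (hτ : 0 < τ)
    (πref : Y → ℝ) (href0 : ∀ y, 0 < πref y) (href1 : ∑ y, πref y = 1)
    (πt : Y → ℝ) (ht0 : ∀ y, 0 < πt y) (ht1 : ∑ y, πt y = 1) :
    Lt P πref πt η τ (omdNext P πref πt η τ) = 0 ∧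
    ∀ π : Y → ℝ, (∀ y, 0 < π y) → (∑ y, π y = 1) →
      Lt P πref πt η τ (omdNext P πref πt η τ) ≤ Lt P πref πt η τ π ∧
      (Lt P πref πt η τ π = Lt P πref πt η τ (omdNext P πref πt η τ) →
        π = omdNext P πref πt η τ) := by
  classical
  have hηne : η ≠ 0 := ne_of_gt hη
  set w := winRate P πt with hw
  set g : Y → ℝ := fun y =>
    Real.exp (w y / η) * πref y ^ (τ / η) * πt y ^ (1 - τ / η) with hg
  have hgpos : ∀ y, 0 < g y := by
    intro y
    have h1 := href0 y; have h2 := ht0 y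
    positivity
  have hYne : Nonempty Y := by
    by_contra h
    rw [not_nonempty_iff] at h
    simp [Finset.univ_eq_empty] at ht1
  set S : ℝ := ∑ y', g y' with hS
  have hSpos : 0 < S := Finset.sum_pos (fun y _ => hgpos y) Finset.univ_nonempty
  set πs := omdNext P πref πt η τ with hπs
  have hπs_eq : ∀ y, πs y = g y / S := fun y => rfl
  have hπspos : ∀ y, 0 < πs y := by
    intro y; rw [hπs_eq]; exact div_pos (hgpos y) hSpos
  have hπs1 : ∑ y, πs y = 1 := by
    simp only [hπs_eq]
    rw [← Finset.sum_div, div_self (ne_of_gt hSpos)]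
  have hlogg : ∀ y, Real.log (g y) =
      w y / η + (τ / η) * Real.log (πref y) + (1 - τ / η) * Real.log (πt y) := by
    intro y
    have h1 := href0 y; have h2 := ht0 y
    have h1' : (0:ℝ) < πref y ^ (τ / η) := Real.rpow_pos_of_pos h1 _
    have h2' : (0:ℝ) < πt y ^ (1 - τ / η) := Real.rpow_pos_of_pos h2 _
    rw [hg]
    rw [Real.log_mul (by positivity) (by positivity),
        Real.log_mul (by positivity) (by positivity),
        Real.log_exp, Real.log_rpow (href0 y), Real.log_rpow (ht0 y)]
  have hkey : ∀ y y', hFun πref πt η τ πs y y' = (w y - w y') / η := by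
    intro y y'
    have hratio : πs y / πs y' = g y / g y' := by
      rw [hπs_eq, hπs_eq]
      rw [div_div_div_eq]
      rw [mul_comm S (g y'), mul_div_mul_right _ _ (ne_of_gt hSpos)]
    rw [hFun, hratio,
        Real.log_div (ne_of_gt (hgpos y)) (ne_of_gt (hgpos y')),
        Real.log_div (ne_of_gt (href0 y)) (ne_of_gt (href0 y')),
        Real.log_div (ne_of_gt (ht0 y)) (ne_of_gt (ht0 y')),
        hlogg, hlogg]
    field_simp
    ring
  have hLs : Lt P πref πt η τ πs = 0 := by
    rw [Lt]
    apply Finset.sum_eq_zero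
    intro y _
    apply Finset.sum_eq_zero
    intro y' _
    rw [hkey]
    simp [hw]
  refine ⟨hLs, fun π hπ0 hπ1 => ?_⟩
  have hnn : ∀ (y : Y), (y ∈ Finset.univ) → (0:ℝ) ≤ ∑ y', πt y * πt y' *
      (hFun πref πt η τ π y y' - (winRate P πt y - winRate P πt y') / η) ^ 2 := by
    intro y _
    apply Finset.sum_nonneg
    intro y' _
    have := ht0 y; have := ht0 y'
    positivity
  have hLnn : 0 ≤ Lt P πref πt η τ π := Finset.sum_nonneg hnn
  constructor
  · rw [hLs]; exact hLnn
  · intro hEq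
    rw [hLs] at hEq
    have hterm : ∀ y y', hFun πref πt η τ π y y' = (w y - w y') / η := by
      intro y y'
      have h1 := (Finset.sum_eq_zero_iff_of_nonneg hnn).mp hEq y (Finset.mem_univ y)
      have h2 := (Finset.sum_eq_zero_iff_of_nonneg (fun y' _ => by
        have := ht0 y; have := ht0 y'; positivity)).mp h1 y' (Finset.mem_univ y')
      have hpp : 0 < πt y * πt y' := mul_pos (ht0 y) (ht0 y')
      have hsq : (hFun πref πt η τ π y y' - (winRate P πt y - winRate P πt y') / η) ^ 2 = 0 := by
        rcases mul_eq_zero.mp h2 with h | h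
        · exact absurd h (ne_of_gt hpp)
        · exact h
      have := pow_eq_zero_iff (n := 2) (by norm_num) |>.mp hsq
      linarith [this, (rfl : w = winRate P πt)]
    -- from hterm and hkey: log ratios agree
    have hratio : ∀ y y', π y / π y' = πs y / πs y' := by
      intro y y'
      have h1 := hterm y y'
      have h2 := hkey y y'
      rw [hFun] at h1 h2
      have hlogeq : Real.log (π y / π y') = Real.log (πs y / πs y') := by linarith
      have e1 : Real.exp (Real.log (π y / π y')) = π y / π y' :=
        Real.exp_log (div_pos (hπ0 y) (hπ0 y'))
      have e2 : Real.exp (Real.log (πs y / πs y')) = πs y / πs y' :=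
        Real.exp_log (div_pos (hπspos y) (hπspos y'))
      rw [← e1, ← e2, hlogeq]
    obtain ⟨y0⟩ := hYne
    have hcross : ∀ z, π z * πs y0 = πs z * π y0 := fun z =>
      (div_eq_div_iff (ne_of_gt (hπ0 y0)) (ne_of_gt (hπspos y0))).mp (hratio z y0)
    have hsum : (∑ z, π z) = (π y0 / πs y0) * ∑ z, πs z := by
      rw [Finset.mul_sum]
      apply Finset.sum_congr rfl
      intro z _
      rw [div_mul_eq_mul_div, eq_div_iff (ne_of_gt (hπspos y0))]
      linarith [hcross z]
    rw [hπ1, hπs1, mul_one] at hsum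
    have hy0 : π y0 = πs y0 := by
      rw [eq_comm, div_eq_one_iff_eq (ne_of_gt (hπspos y0))] at hsum
      exact hsum
    funext y
    have := hcross y
    rw [hy0] at this
    exact mul_right_cancel₀ (ne_of_gt (hπspos y0)) this
end

section
/- Let Y be a finite set and let negative entropy φ(π) = ∑_y π(y) log π(y) on the simplex, with Bregman divergence D_φ(π,π') = KL(π‖π'). Let δ : Y → ℝ, π⁻ a fully supported distribution, and π⁺ = argmax_{π ∈ Δ(Y)} [⟨π, δ⟩ − KL(π‖π⁻)]. Then for any distribution π ∈ Δ(Y) absolutely continuous with respect to π⁻: KL(π‖π⁺) ≤ KL(π‖π⁻) + ∑_y (π⁻(y) − π(y))·δ(y) + 2·‖δ‖_∞². -/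
/-!
The maximiser π⁺ of `⟨π, δ⟩ - KL(π‖π⁻)` is the Gibbs tilt `q ∝ π⁻ e^δ`: the identity
`KL(π‖q) = KL(π‖π⁻) - ⟨π, δ⟩ + log Z` shows that the objective equals `log Z - KL(π‖q)`, so
Gibbs' inequality (`KL = ∑ q · klFun (p / q)` with `klFun ≥ 0` vanishing only at `1`) forces
`π⁺ = q`. The same identity reduces the claim to the bound `log Z ≤ ⟨π⁻, δ⟩ + 2‖δ‖∞²` on the
log-partition function, which follows from `eˣ ≤ 1 + x + x²` when `‖δ‖∞ ≤ 1` and from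
`log Z ≤ ‖δ‖∞` and `-⟨π⁻, δ⟩ ≤ ‖δ‖∞` otherwise.
-/

open Finset

section

open Real InformationTheory

variable {Y : Type*} [Fintype Y]

lemma KL_eq_sum_mul_klFun {p q : Y → ℝ} (hq : ∀ y, 0 < q y) (hpq : ∑ y, p y = ∑ y, q y) :
    KL p q = ∑ y, q y * klFun (p y / q y) := by
  have hterm : ∀ y, q y * klFun (p y / q y) = p y * log (p y / q y) + (q y - p y) := by
    intro y
    have hcancel : q y * (p y / q y) = p y := mul_div_cancel₀ _ (hq y).ne'
    rw [klFun_apply]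
    linear_combination (log (p y / q y) - 1) * hcancel
  simp only [hterm, sum_add_distrib, sum_sub_distrib, hpq, sub_self, add_zero, KL]

lemma eq_of_KL_nonpos {p q : Y → ℝ} (hp : ∀ y, 0 ≤ p y) (hq : ∀ y, 0 < q y)
    (hpq : ∑ y, p y = ∑ y, q y) (h : KL p q ≤ 0) : p = q := by
  have hterm_nonneg : ∀ y ∈ univ, 0 ≤ q y * klFun (p y / q y) := fun y _ =>
    mul_nonneg (hq y).le (klFun_nonneg (div_nonneg (hp y) (hq y).le))
  have hzero := (sum_eq_zero_iff_of_nonneg hterm_nonneg).mp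
    (le_antisymm (KL_eq_sum_mul_klFun hq hpq ▸ h) (sum_nonneg hterm_nonneg))
  funext y
  have := (klFun_eq_zero_iff (div_nonneg (hp y) (hq y).le)).mp
    ((mul_eq_zero.mp (hzero y (mem_univ y))).resolve_left (hq y).ne')
  rwa [div_eq_one_iff_eq (hq y).ne'] at this

lemma KL_self (p : Y → ℝ) : KL p p = 0 := by
  simp [KL]

noncomputable def gibbs (w f : Y → ℝ) (y : Y) : ℝ :=
  w y * exp (f y) / ∑ z, w z * exp (f z)

lemma sum_mul_exp_pos [Nonempty Y] {w : Y → ℝ} (hw : ∀ y, 0 < w y) (f : Y → ℝ) :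
    0 < ∑ y, w y * exp (f y) :=
  sum_pos (fun y _ => mul_pos (hw y) (exp_pos _)) univ_nonempty

lemma gibbs_pos [Nonempty Y] {w : Y → ℝ} (hw : ∀ y, 0 < w y) (f : Y → ℝ) (y : Y) :
    0 < gibbs w f y :=
  div_pos (mul_pos (hw y) (exp_pos _)) (sum_mul_exp_pos hw f)

lemma sum_gibbs [Nonempty Y] {w : Y → ℝ} (hw : ∀ y, 0 < w y) (f : Y → ℝ) :
    ∑ y, gibbs w f y = 1 := by
  simp only [gibbs]
  rw [← sum_div, div_self (sum_mul_exp_pos hw f).ne']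

lemma KL_gibbs [Nonempty Y] {w : Y → ℝ} (hw : ∀ y, 0 < w y) (f : Y → ℝ) {p : Y → ℝ}
    (hp : ∑ y, p y = 1) :
    KL p (gibbs w f) = KL p w - ∑ y, p y * f y + log (∑ y, w y * exp (f y)) := by
  set Z := ∑ y, w y * exp (f y)
  have hZ : Z ≠ 0 := (sum_mul_exp_pos hw f).ne'
  have hterm : ∀ y, p y * log (p y / gibbs w f y) =
      p y * log (p y / w y) - p y * f y + p y * log Z := by
    intro y
    rcases eq_or_ne (p y) 0 with h | h
    · simp [h]
    have hwe : w y * exp (f y) ≠ 0 := mul_ne_zero (hw y).ne' (exp_pos _).ne'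
    rw [gibbs, log_div h (div_ne_zero hwe hZ), log_div hwe hZ, log_mul (hw y).ne' (exp_pos _).ne',
      log_exp, log_div h (hw y).ne']
    ring
  simp only [KL, hterm, sum_add_distrib, sum_sub_distrib, ← sum_mul, hp, one_mul]

lemma log_sum_mul_exp_le {w f : Y → ℝ} {M : ℝ} (hw : ∀ y, 0 ≤ w y) (hw1 : ∑ y, w y = 1)
    (hf : ∀ y, |f y| ≤ M) :
    log (∑ y, w y * exp (f y)) ≤ ∑ y, w y * f y + 2 * M ^ 2 := by
  have hweighted {g h : Y → ℝ} (hgh : ∀ y, g y ≤ h y) : ∑ y, w y * g y ≤ ∑ y, w y * h y :=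
    sum_le_sum fun y _ => mul_le_mul_of_nonneg_left (hgh y) (hw y)
  have hmean_const (c : ℝ) : ∑ y, w y * c = c := by rw [← sum_mul, hw1, one_mul]
  have hZ_pos : 0 < ∑ y, w y * exp (f y) := by
    calc 0 < exp (-M) := exp_pos _
      _ = ∑ y, w y * exp (-M) := (hmean_const _).symm
      _ ≤ _ := hweighted fun y => exp_le_exp.mpr (neg_le_of_abs_le (hf y))
  rcases le_or_gt M 1 with hM | hM
  · have hexp (y : Y) : exp (f y) ≤ 1 + f y + M ^ 2 := by
      have := abs_le.mp (abs_exp_sub_one_sub_id_le ((hf y).trans hM))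
      nlinarith [sq_le_sq' (neg_le_of_abs_le (hf y)) (le_of_abs_le (hf y))]
    have hZ_le : ∑ y, w y * exp (f y) ≤ 1 + ∑ y, w y * f y + M ^ 2 := by
      calc _ ≤ ∑ y, w y * (1 + f y + M ^ 2) := hweighted hexp
        _ = _ := by simp only [mul_add, sum_add_distrib, hmean_const, mul_one, hw1]
    linarith [log_le_sub_one_of_pos hZ_pos, sq_nonneg M]
  · have hlog_le : log (∑ y, w y * exp (f y)) ≤ M := by
      rw [log_le_iff_le_exp hZ_pos, ← hmean_const (exp M)]
      exact hweighted fun y => exp_le_exp.mpr (le_of_abs_le (hf y))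
    have hmean_ge : -M ≤ ∑ y, w y * f y := by
      rw [← hmean_const (-M)]
      exact hweighted fun y => neg_le_of_abs_le (hf y)
    nlinarith

end

theorem omd_one_step_lemma_general {Y : Type*} [Fintype Y]
    (δ : Y → ℝ)
    (πminus : Y → ℝ) (hm0 : ∀ y, 0 < πminus y) (hm1 : ∑ y, πminus y = 1)
    (πplus : Y → ℝ) (hp0 : ∀ y, 0 < πplus y) (hp1 : ∑ y, πplus y = 1)
    (hargmax : ∀ π : Y → ℝ, (∀ y, 0 ≤ π y) → (∑ y, π y = 1) →
      (∑ y, π y * δ y) - KL π πminus ≤ (∑ y, πplus y * δ y) - KL πplus πminus) :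
    ∀ π : Y → ℝ, (∀ y, 0 ≤ π y) → (∑ y, π y = 1) →
      KL π πplus ≤ KL π πminus + (∑ y, (πminus y - π y) * δ y) +
        2 * (⨆ y, |δ y|) ^ 2 := by
  have : Nonempty Y := by
    by_contra hY
    simp [not_nonempty_iff.mp hY] at hm1
  have hq0 := gibbs_pos hm0 δ
  have hq1 := sum_gibbs hm0 δ
  have hplus : πplus = gibbs πminus δ := by
    refine eq_of_KL_nonpos (fun y => (hp0 y).le) hq0 (by rw [hp1, hq1]) ?_
    have hq_self := KL_gibbs hm0 δ hq1
    rw [KL_self] at hq_self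
    linarith [KL_gibbs hm0 δ hp1, hargmax (gibbs πminus δ) (fun y => (hq0 y).le) hq1]
  intro π _ hπ1
  have hlog := log_sum_mul_exp_le (fun y => (hm0 y).le) hm1
    (fun y => le_ciSup (Set.finite_range fun y => |δ y|).bddAbove y)
  rw [hplus, KL_gibbs hm0 δ hπ1]
  simp only [sub_mul, sum_sub_distrib]
  linarith

theorem omd_one_step_lemma {Y : Type*} [Fintype Y] [Nonempty Y]
    (δ : Y → ℝ)
    (πminus : Y → ℝ) (hm0 : ∀ y, 0 < πminus y) (hm1 : ∑ y, πminus y = 1)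
    (πplus : Y → ℝ) (hp0 : ∀ y, 0 < πplus y) (hp1 : ∑ y, πplus y = 1)
    (hargmax : ∀ π : Y → ℝ, (∀ y, 0 ≤ π y) → (∑ y, π y = 1) →
      (∑ y, π y * δ y) - KL π πminus ≤ (∑ y, πplus y * δ y) - KL πplus πminus) :
    ∀ π : Y → ℝ, (∀ y, 0 ≤ π y) → (∑ y, π y = 1) →
      KL π πplus ≤ KL π πminus + (∑ y, (πminus y - π y) * δ y) +
        2 * (⨆ y, |δ y|) ^ 2 :=
  omd_one_step_lemma_general δ πminus hm0 hm1 πplus hp0 hp1 hargmax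
end

section
/- Let Y be a finite set, and for t = 1,...,T let ℓ_t(π) = −∑_{y,y'} π(y)π_t(y')P(y,y') + τ·KL(π‖π_ref), where π_t are fully supported distributions, P(y,y')+P(y',y)=1, τ ≥ 0. Let π̄ = (1/T)∑_{t=1}^T π_t and define J(π₁,π₂) = ∑_{y,y'} π₁(y)π₂(y')P(y,y') − τ·KL(π₁‖π_ref) + τ·KL(π₂‖π_ref). Then for any fully supported distribution π: (1/T)∑_{t=1}^T (ℓ_t(π_t) − ℓ_t(π)) ≥ J(π, π̄) − 1/2. -/
open Finset

/-- The per-iteration loss `ℓ_t(π)` of the OMD analysis. -/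
noncomputable def ellT {Y : Type*} [Fintype Y]
    (P : Y → Y → ℝ) (πt πref : Y → ℝ) (τ : ℝ) (π : Y → ℝ) : ℝ :=
  -(∑ y, ∑ y', π y * πt y' * P y y') + τ * KL π πref

theorem avg_loss_lower_bounds_game {Y : Type*} [Fintype Y]
    (P : Y → Y → ℝ)
    (hP01 : ∀ y y' : Y, 0 ≤ P y y' ∧ P y y' ≤ 1)
    (hPcomp : ∀ y y' : Y, P y y' + P y' y = 1)
    (τ : ℝ) (hτ : 0 ≤ τ)
    (πref : Y → ℝ) (href0 : ∀ y, 0 < πref y) (href1 : ∑ y, πref y = 1)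
    (T : ℕ) (hT : 1 ≤ T)
    (π : Fin T → Y → ℝ)
    (hπ0 : ∀ t y, 0 < π t y) (hπ1 : ∀ t, ∑ y, π t y = 1) :
    ∀ q : Y → ℝ, (∀ y, 0 < q y) → (∑ y, q y = 1) →
      gameJ P τ πref q (fun y => (1 / (T : ℝ)) * ∑ t, π t y) - 1 / 2 ≤
        (1 / (T : ℝ)) * ∑ t, (ellT P (π t) πref τ (π t) - ellT P (π t) πref τ q) := by
  intro q hq0 hq1
  have hTpos : (0:ℝ) < (T:ℝ) := by exact_mod_cast Nat.lt_of_lt_of_le Nat.zero_lt_one hT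
  set w : ℝ := 1 / (T:ℝ) with hw
  have hwpos : 0 < w := by positivity
  have hwT : w * (T:ℝ) = 1 := by rw [hw]; field_simp
  -- Step 1: each self-play value is 1/2
  have hself : ∀ t, ∑ y, ∑ y', π t y * π t y' * P y y' = 1/2 := by
    intro t
    have hswap : ∑ y, ∑ y', π t y * π t y' * P y' y
        = ∑ y, ∑ y', π t y * π t y' * P y y' := by
      rw [Finset.sum_comm]
      exact Finset.sum_congr rfl fun y _ => Finset.sum_congr rfl fun y' _ => by ring
    have hcomb : (∑ y, ∑ y', π t y * π t y' * P y y')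
        + (∑ y, ∑ y', π t y * π t y' * P y' y) = 1 := by
      have h2 : ∑ y, ∑ y', (π t y * π t y' * P y y' + π t y * π t y' * P y' y) = 1 := by
        have h1 : ∀ y y' : Y, π t y * π t y' * P y y' + π t y * π t y' * P y' y
            = π t y * π t y' := by
          intro y y'
          rw [← mul_add, hPcomp, mul_one]
        simp only [h1]
        rw [← Finset.sum_mul_sum, hπ1 t]
        ring
      rw [← h2]
      simp [Finset.sum_add_distrib]
    linarith [hswap, hcomb]
  -- Step 2: mixture identity
  have hmix : ∑ y, ∑ y', q y * (w * ∑ t, π t y') * P y y'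
      = w * ∑ t, ∑ y, ∑ y', q y * π t y' * P y y' := by
    calc ∑ y, ∑ y', q y * (w * ∑ t, π t y') * P y y'
        = ∑ y, ∑ y', ∑ t, w * (q y * π t y' * P y y') := by
          refine Finset.sum_congr rfl fun y _ => Finset.sum_congr rfl fun y' _ => ?_
          rw [Finset.mul_sum, Finset.mul_sum, Finset.sum_mul]
          exact Finset.sum_congr rfl fun tt _ => by ring
      _ = ∑ y, ∑ t, ∑ y', w * (q y * π t y' * P y y') :=
          Finset.sum_congr rfl fun y _ => Finset.sum_comm
      _ = ∑ t, ∑ y, ∑ y', w * (q y * π t y' * P y y') := Finset.sum_comm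
      _ = w * ∑ t, ∑ y, ∑ y', q y * π t y' * P y y' := by
          rw [Finset.mul_sum]
          refine Finset.sum_congr rfl fun t _ => ?_
          rw [Finset.mul_sum]
          exact Finset.sum_congr rfl fun y _ => (Finset.mul_sum _ _ _).symm
  -- Step 3: convexity of KL (Jensen)
  have key : ∀ y : Y, (w * ∑ t, π t y) * Real.log ((w * ∑ t, π t y) / πref y)
      ≤ ∑ t, w * (π t y * Real.log (π t y / πref y)) := by
    intro y
    have hrefy := href0 y
    have hrefne : πref y ≠ 0 := ne_of_gt hrefy
    have hr : ∀ t : Fin T, π t y / πref y ∈ Set.Ici (0:ℝ) := fun t =>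
      le_of_lt (div_pos (hπ0 t y) hrefy)
    have hwsum : ∑ _t : Fin T, w = 1 := by
      rw [Finset.sum_const, Finset.card_univ, Fintype.card_fin, nsmul_eq_mul, hw]
      field_simp
    have hj := Real.convexOn_mul_log.map_sum_le (t := Finset.univ)
      (w := fun _ : Fin T => w) (p := fun t : Fin T => π t y / πref y)
      (fun _ _ => le_of_lt hwpos) hwsum (fun t _ => hr t)
    have hmixval : ∑ t : Fin T, w • (π t y / πref y)
        = (w * ∑ t, π t y) / πref y := by
      simp only [smul_eq_mul]
      rw [Finset.mul_sum, Finset.sum_div]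
      exact Finset.sum_congr rfl fun t _ => by field_simp
    rw [hmixval] at hj
    have hj' := mul_le_mul_of_nonneg_left hj (le_of_lt hrefy)
    calc (w * ∑ t, π t y) * Real.log ((w * ∑ t, π t y) / πref y)
        = πref y * ((w * ∑ t, π t y) / πref y
            * Real.log ((w * ∑ t, π t y) / πref y)) := by field_simp
      _ ≤ πref y * ∑ t : Fin T, w * (π t y / πref y * Real.log (π t y / πref y)) := hj'
      _ = ∑ t : Fin T, w * (π t y * Real.log (π t y / πref y)) := by
          rw [Finset.mul_sum]
          refine Finset.sum_congr rfl fun t _ => ?_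
          field_simp
          try ring
  have hKL : KL (fun y => w * ∑ t, π t y) πref ≤ w * ∑ t, KL (π t) πref := by
    simp only [KL]
    calc ∑ y, (w * ∑ t, π t y) * Real.log ((w * ∑ t, π t y) / πref y)
        ≤ ∑ y, ∑ t, w * (π t y * Real.log (π t y / πref y)) :=
          Finset.sum_le_sum fun y _ => key y
      _ = ∑ t, ∑ y, w * (π t y * Real.log (π t y / πref y)) := Finset.sum_comm
      _ = w * ∑ t, ∑ y, π t y * Real.log (π t y / πref y) := by
          rw [Finset.mul_sum]
          exact Finset.sum_congr rfl fun t _ => (Finset.mul_sum _ _ _).symm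
  -- Final assembly
  have hRHS : (∑ t, (ellT P (π t) πref τ (π t) - ellT P (π t) πref τ q))
      = (∑ t, ∑ y, ∑ y', q y * π t y' * P y y') + τ * (∑ t, KL (π t) πref)
        - (T:ℝ) * (1/2) - (T:ℝ) * (τ * KL q πref) := by
    have hterm : ∀ t, ellT P (π t) πref τ (π t) - ellT P (π t) πref τ q
        = (∑ y, ∑ y', q y * π t y' * P y y') + τ * KL (π t) πref
          - 1/2 - τ * KL q πref := by
      intro t
      simp only [ellT]
      rw [hself t]
      ring
    rw [Finset.sum_congr rfl fun t _ => hterm t]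
    rw [Finset.sum_sub_distrib, Finset.sum_sub_distrib, Finset.sum_add_distrib,
      ← Finset.mul_sum, Finset.sum_const, Finset.sum_const, Finset.card_univ,
      Fintype.card_fin, nsmul_eq_mul, nsmul_eq_mul]
    try ring
  rw [hRHS]
  simp only [gameJ]
  rw [hmix]
  set SA := ∑ t, ∑ y, ∑ y', q y * π t y' * P y y' with hSA
  set SK := ∑ t, KL (π t) πref with hSK
  set Kq := KL q πref with hKq
  have hexp : w * (SA + τ * SK - (T:ℝ) * (1/2) - (T:ℝ) * (τ * Kq))
      = w * SA + τ * (w * SK) - 1/2 - τ * Kq := by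
    linear_combination (-(1/2 : ℝ) - τ * Kq) * hwT
  rw [hexp]
  have h1 := mul_le_mul_of_nonneg_left hKL hτ
  linarith [h1]
end

section
/- Let Y be a finite set and π_ref a fully supported distribution on Y. For T ≥ 1, let distributions π_1,...,π_T be fully supported, and suppose a regret bound holds: for all fully supported π, ∑_{t=1}^T ⟨g_t, π_t − π⟩ ≤ R, where g_t(y) = −∑_{y'}π_t(y')P(y,y') + τ(log(π_t(y)/π_ref(y)) + 1) is the gradient of the convex loss ℓ_t(π) = −∑_{y,y'}π(y)π_t(y')P(y,y') + τ·KL(π‖π_ref). Let π̄ = (1/T)∑_t π_t and J(π₁,π₂) = ∑_{y,y'}π₁(y)π₂(y')P(y,y') − τ·KL(π₁‖π_ref) + τ·KL(π₂‖π_ref). Then max_π J(π, π̄) − min_π J(π̄, π) ≤ 2R/T, where the max and min range over fully supported distributions, provided P(y,y')+P(y',y)=1. -/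
open Finset

lemma gibbs' {Y : Type*} [Fintype Y] (p q : Y → ℝ) (hp : ∀ y, 0 < p y)
    (hq : ∀ y, 0 < q y) (hpq : ∑ y, p y = ∑ y, q y) :
    0 ≤ ∑ y, q y * Real.log (q y / p y) := by
  have h : ∑ y, q y * Real.log (p y / q y) ≤ ∑ y, (p y - q y) := by
    apply Finset.sum_le_sum
    intro y _
    have hlog := Real.log_le_sub_one_of_pos (div_pos (hp y) (hq y))
    have h2 := mul_le_mul_of_nonneg_left hlog (hq y).le
    calc q y * Real.log (p y / q y) ≤ q y * (p y / q y - 1) := h2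
      _ = p y - q y := by
        rw [mul_sub, mul_one, mul_div_cancel₀ _ (hq y).ne']
  have h0 : ∑ y, (p y - q y) = 0 := by rw [Finset.sum_sub_distrib, hpq, sub_self]
  have hneg : ∑ y, q y * Real.log (q y / p y) = -∑ y, q y * Real.log (p y / q y) := by
    rw [← Finset.sum_neg_distrib]
    apply Finset.sum_congr rfl
    intro y _
    rw [Real.log_div (hq y).ne' (hp y).ne', Real.log_div (hp y).ne' (hq y).ne']
    ring
  rw [hneg]
  linarith [h.trans_eq h0]

lemma cross' {Y : Type*} [Fintype Y] (P : Y → Y → ℝ)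
    (hPcomp : ∀ y y' : Y, P y y' + P y' y = 1)
    (p q : Y → ℝ) (hp1 : ∑ y, p y = 1) (hq1 : ∑ y, q y = 1) :
    (∑ y, ∑ y', p y * q y' * P y y') + (∑ y, ∑ y', q y * p y' * P y y') = 1 := by
  have hswap : ∑ y, ∑ y', q y * p y' * P y y' = ∑ y, ∑ y', p y * q y' * P y' y := by
    rw [Finset.sum_comm]
    apply Finset.sum_congr rfl; intro y _
    apply Finset.sum_congr rfl; intro y' _
    ring
  rw [hswap, ← Finset.sum_add_distrib]
  have : ∀ y, ((∑ y', p y * q y' * P y y') + ∑ y', p y * q y' * P y' y)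
      = ∑ y', p y * q y' := by
    intro y
    rw [← Finset.sum_add_distrib]
    apply Finset.sum_congr rfl; intro y' _
    linear_combination (p y * q y') * hPcomp y y'
  calc ∑ y, ((∑ y', p y * q y' * P y y') + ∑ y', p y * q y' * P y' y)
      = ∑ y, ∑ y', p y * q y' := Finset.sum_congr rfl (fun y _ => this y)
    _ = ∑ y, p y * ∑ y', q y' := by
        apply Finset.sum_congr rfl; intro y _; rw [Finset.mul_sum]
    _ = 1 := by rw [hq1]; simpa using hp1

lemma selfplay' {Y : Type*} [Fintype Y] (P : Y → Y → ℝ)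
    (hPcomp : ∀ y y' : Y, P y y' + P y' y = 1)
    (p : Y → ℝ) (hp1 : ∑ y, p y = 1) :
    ∑ y, ∑ y', p y * p y' * P y y' = 1 / 2 := by
  have := cross' P hPcomp p p hp1 hp1
  linarith

theorem regret_to_duality_gap {Y : Type*} [Fintype Y]
    (P : Y → Y → ℝ)
    (hP01 : ∀ y y' : Y, 0 ≤ P y y' ∧ P y y' ≤ 1)
    (hPcomp : ∀ y y' : Y, P y y' + P y' y = 1)
    (τ : ℝ) (hτ : 0 ≤ τ)
    (πref : Y → ℝ) (href0 : ∀ y, 0 < πref y) (href1 : ∑ y, πref y = 1)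
    (T : ℕ) (hT : 1 ≤ T)
    (π : Fin T → Y → ℝ)
    (hπ0 : ∀ t y, 0 < π t y) (hπ1 : ∀ t, ∑ y, π t y = 1)
    (R : ℝ)
    (g : Fin T → Y → ℝ)
    (hg : ∀ t y, g t y = -(∑ y', π t y' * P y y') +
      τ * (Real.log (π t y / πref y) + 1))
    (hreg : ∀ q : Y → ℝ, (∀ y, 0 < q y) → (∑ y, q y = 1) →
      ∑ t, ∑ y, g t y * (π t y - q y) ≤ R) :
    ∀ π₁ π₂ : Y → ℝ, (∀ y, 0 < π₁ y) → (∑ y, π₁ y = 1) →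
      (∀ y, 0 < π₂ y) → (∑ y, π₂ y = 1) →
      gameJ P τ πref π₁ (fun y => (1 / (T : ℝ)) * ∑ t, π t y) -
        gameJ P τ πref (fun y => (1 / (T : ℝ)) * ∑ t, π t y) π₂ ≤
          2 * R / (T : ℝ) := by
  intro π₁ π₂ h10 h11 h20 h21
  have hTpos : (0:ℝ) < (T:ℝ) := by exact_mod_cast hT
  set avg : Y → ℝ := fun y => (1 / (T : ℝ)) * ∑ t, π t y with havg_def
  have havg0 : ∀ y, 0 < avg y := by
    intro y
    apply mul_pos (by positivity)
    apply Finset.sum_pos (fun t _ => hπ0 t y)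
    exact Finset.univ_nonempty_iff.mpr ⟨⟨0, hT⟩⟩
  have havg1 : ∑ y, avg y = 1 := by
    simp only [havg_def, ← Finset.mul_sum]
    rw [Finset.sum_comm]
    have : ∑ t : Fin T, ∑ y, π t y = (T:ℝ) := by
      rw [Finset.sum_congr rfl (fun t _ => hπ1 t)]; simp
    rw [this]; field_simp
  -- Step A : per-round convexity bound
  have hA : ∀ (q : Y → ℝ), (∀ y, 0 < q y) → (∑ y, q y = 1) → ∀ t : Fin T,
      gameJ P τ πref q (π t) - 1/2 ≤ ∑ y, g t y * (π t y - q y) := by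
    intro q hq0 hq1 t
    set p : Y → ℝ := π t with hp_def
    have hp0 : ∀ y, 0 < p y := hπ0 t
    have hp1 : ∑ y, p y = 1 := hπ1 t
    have hexp : ∀ y, g t y * (p y - q y)
        = -(∑ y', p y * p y' * P y y') + (∑ y', q y * p y' * P y y')
          + τ * (p y * Real.log (p y / πref y)) - τ * (q y * Real.log (p y / πref y))
          + τ * (p y - q y) := by
      intro y
      rw [hg t y]
      have e1 : (∑ y', p y' * P y y') * p y = ∑ y', p y * p y' * P y y' := by
        rw [Finset.sum_mul]; apply Finset.sum_congr rfl; intro y' _; ring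
      have e2 : (∑ y', p y' * P y y') * q y = ∑ y', q y * p y' * P y y' := by
        rw [Finset.sum_mul]; apply Finset.sum_congr rfl; intro y' _; ring
      calc (-(∑ y', p y' * P y y') + τ * (Real.log (p y / πref y) + 1)) * (p y - q y)
          = -((∑ y', p y' * P y y') * p y) + ((∑ y', p y' * P y y') * q y)
            + τ * (p y * Real.log (p y / πref y)) - τ * (q y * Real.log (p y / πref y))
            + τ * (p y - q y) := by ring
        _ = _ := by rw [e1, e2]
    have hsum : ∑ y, g t y * (p y - q y)
        = -(∑ y, ∑ y', p y * p y' * P y y') + (∑ y, ∑ y', q y * p y' * P y y')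
          + τ * (∑ y, p y * Real.log (p y / πref y))
          - τ * (∑ y, q y * Real.log (p y / πref y))
          + τ * ((∑ y, p y) - (∑ y, q y)) := by
      rw [Finset.sum_congr rfl (fun y _ => hexp y)]
      simp only [Finset.sum_add_distrib, Finset.sum_sub_distrib, Finset.sum_neg_distrib,
        ← Finset.mul_sum]
    rw [hsum, selfplay' P hPcomp p hp1, hp1, hq1]
    have hKLdiff : KL q πref - (∑ y, q y * Real.log (p y / πref y))
        = ∑ y, q y * Real.log (q y / p y) := by
      unfold KL
      rw [← Finset.sum_sub_distrib]
      apply Finset.sum_congr rfl; intro y _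
      rw [Real.log_div (hq0 y).ne' (href0 y).ne', Real.log_div (hp0 y).ne' (href0 y).ne',
        Real.log_div (hq0 y).ne' (hp0 y).ne']
      ring
    have hgibbs := gibbs' p q hp0 hq0 (by rw [hp1, hq1])
    have hτg : 0 ≤ τ * ∑ y, q y * Real.log (q y / p y) := mul_nonneg hτ hgibbs
    unfold gameJ KL
    unfold KL at hKLdiff
    nlinarith [hKLdiff, hτg]
  -- Step B : averaged bound  gameJ q avg ≤ R/T + 1/2
  have hB : ∀ (q : Y → ℝ), (∀ y, 0 < q y) → (∑ y, q y = 1) →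
      gameJ P τ πref q avg ≤ R / (T:ℝ) + 1/2 := by
    intro q hq0 hq1
    -- sum of per-round bounds
    have hsumA : ∑ t, (gameJ P τ πref q (π t) - 1/2) ≤ R := by
      calc ∑ t, (gameJ P τ πref q (π t) - 1/2)
          ≤ ∑ t, ∑ y, g t y * (π t y - q y) :=
            Finset.sum_le_sum (fun t _ => hA q hq0 hq1 t)
        _ ≤ R := hreg q hq0 hq1
    have hsumA' : ∑ t, gameJ P τ πref q (π t) ≤ R + (T:ℝ)/2 := by
      rw [Finset.sum_sub_distrib] at hsumA
      simp only [Finset.sum_const, Finset.card_univ, Fintype.card_fin, nsmul_eq_mul] at hsumA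
      linarith
    -- linearity of the bilinear part in the second argument
    have hlin : ∑ y, ∑ y', q y * avg y' * P y y'
        = (1/(T:ℝ)) * ∑ t, ∑ y, ∑ y', q y * π t y' * P y y' := by
      have step1 : ∀ y y', q y * avg y' * P y y'
          = ∑ t, (1/(T:ℝ)) * (q y * π t y' * P y y') := by
        intro y y'
        simp only [havg_def]
        rw [show q y * (1/(T:ℝ) * ∑ t, π t y') * P y y'
            = (1/(T:ℝ)) * ((∑ t, π t y') * (q y * P y y')) from by ring,
          Finset.sum_mul, Finset.mul_sum]
        apply Finset.sum_congr rfl; intro t _; ring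
      calc ∑ y, ∑ y', q y * avg y' * P y y'
          = ∑ y, ∑ y', ∑ t, (1/(T:ℝ)) * (q y * π t y' * P y y') := by
            exact Finset.sum_congr rfl (fun y _ =>
              Finset.sum_congr rfl (fun y' _ => step1 y y'))
        _ = ∑ y, ∑ t, ∑ y', (1/(T:ℝ)) * (q y * π t y' * P y y') := by
            exact Finset.sum_congr rfl (fun y _ => Finset.sum_comm)
        _ = ∑ t, ∑ y, ∑ y', (1/(T:ℝ)) * (q y * π t y' * P y y') :=
            Finset.sum_comm
        _ = (1/(T:ℝ)) * ∑ t, ∑ y, ∑ y', q y * π t y' * P y y' := by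
            simp only [← Finset.mul_sum]
    -- convexity of KL in first argument
    have hKLconv : KL avg πref ≤ (1/(T:ℝ)) * ∑ t, KL (π t) πref := by
      have hKLavg : KL avg πref
          = (1/(T:ℝ)) * ∑ t, ∑ y, π t y * Real.log (avg y / πref y) := by
        unfold KL
        have step1 : ∀ y, avg y * Real.log (avg y / πref y)
            = ∑ t, (1/(T:ℝ)) * (π t y * Real.log (avg y / πref y)) := by
          intro y
          simp only [havg_def]
          rw [mul_assoc, Finset.sum_mul, Finset.mul_sum]
        rw [Finset.sum_congr rfl (fun y _ => step1 y), Finset.sum_comm]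
        simp only [← Finset.mul_sum]
      have hdiff : ∀ t : Fin T,
          0 ≤ KL (π t) πref - ∑ y, π t y * Real.log (avg y / πref y) := by
        intro t
        have := gibbs' avg (π t) havg0 (hπ0 t) (by rw [havg1, hπ1 t])
        have heq : KL (π t) πref - ∑ y, π t y * Real.log (avg y / πref y)
            = ∑ y, π t y * Real.log (π t y / avg y) := by
          unfold KL
          rw [← Finset.sum_sub_distrib]
          apply Finset.sum_congr rfl; intro y _
          rw [Real.log_div (hπ0 t y).ne' (href0 y).ne',
            Real.log_div (havg0 y).ne' (href0 y).ne',
            Real.log_div (hπ0 t y).ne' (havg0 y).ne']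
          ring
        rw [heq]; exact this
      have hsumdiff : 0 ≤ ∑ t, (KL (π t) πref - ∑ y, π t y * Real.log (avg y / πref y)) :=
        Finset.sum_nonneg (fun t _ => hdiff t)
      rw [Finset.sum_sub_distrib] at hsumdiff
      rw [hKLavg]
      have hT1 : 0 ≤ (1/(T:ℝ)) := by positivity
      nlinarith [hsumdiff]
    -- combine
    have hJavg : gameJ P τ πref q avg
        ≤ (1/(T:ℝ)) * ∑ t, gameJ P τ πref q (π t) := by
      unfold gameJ
      have hexp : (1/(T:ℝ)) * ∑ t, ((∑ y, ∑ y', q y * π t y' * P y y')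
            - τ * KL q πref + τ * KL (π t) πref)
          = (1/(T:ℝ)) * (∑ t, ∑ y, ∑ y', q y * π t y' * P y y')
            - τ * KL q πref + (1/(T:ℝ)) * (τ * ∑ t, KL (π t) πref) := by
        rw [Finset.sum_add_distrib, Finset.sum_sub_distrib]
        simp only [Finset.sum_const, Finset.card_univ, Fintype.card_fin, nsmul_eq_mul,
          ← Finset.mul_sum]
        field_simp
        try ring
      rw [hexp, hlin]
      have := mul_nonneg hτ (sub_nonneg.mpr hKLconv)
      nlinarith [this]
    calc gameJ P τ πref q avg ≤ (1/(T:ℝ)) * ∑ t, gameJ P τ πref q (π t) := hJavg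
      _ ≤ (1/(T:ℝ)) * (R + (T:ℝ)/2) := by
          apply mul_le_mul_of_nonneg_left hsumA' (by positivity)
      _ = R / (T:ℝ) + 1/2 := by field_simp; try ring
  -- antisymmetry : gameJ avg π₂ = 1 - gameJ π₂ avg
  have hanti : gameJ P τ πref avg π₂ + gameJ P τ πref π₂ avg = 1 := by
    unfold gameJ
    have := cross' P hPcomp avg π₂ havg1 h21
    linarith
  have h1 := hB π₁ h10 h11
  have h2 := hB π₂ h20 h21
  have hfin : gameJ P τ πref π₁ avg - gameJ P τ πref avg π₂ ≤ 2 * R / (T:ℝ) := by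
    have : 2 * R / (T:ℝ) = 2 * (R / (T:ℝ)) := by ring
    rw [this]
    linarith
  exact hfin
end
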